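/- arXiv:1008.0110 — 2 statements merged into one kernel-verified Lean document; each statement's English description precedes it below -/
import Mathlib

section
/- Let ABC be a triangle, K an interior point with isogonal conjugate K₁, and let DEF be the pedal triangle of K₁ with respect to ABC (D, E, F projections of K₁ onto BC, CA, AB), and TUV the antipedal triangle of K with respect to ABC. Then the triangles TUV and DEF are homothetic: VU ∥ EF, VT ∥ DF, and TU ∥ DE. -/
open EuclideanGeometry Real

noncomputable def triArea (X Y Z : EuclideanSpace ℝ (Fin 2)) : ℝ :=
  |(Y 0 - X 0) * (Z 1 - X 1) - (Y 1 - X 1) * (Z 0 - X 0)| / 2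

/-- `F` is the foot of the perpendicular from `P` to the line through `X` and `Y`. -/
def IsFoot (P F X Y : EuclideanSpace ℝ (Fin 2)) : Prop :=
  F ∈ affineSpan ℝ ({X, Y} : Set (EuclideanSpace ℝ (Fin 2))) ∧
    inner ℝ (P - F) (Y - X) = (0 : ℝ)

/-- `K₁` is the isogonal conjugate of `K` with respect to triangle `ABC`. -/
def IsIsogonalConj (A B C K K₁ : EuclideanSpace ℝ (Fin 2)) : Prop :=
  ∠ K₁ A B = ∠ K A C ∧ ∠ K₁ B C = ∠ K B A ∧ ∠ K₁ C A = ∠ K C B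

/-!
At `A`, write `F` and `E` for the feet of `K₁` on `AB` and `AC`. Since `F - A` is the projection
of `K₁ - A` on `AB`, `⟪F - A, K - A⟫ = |AK₁| |AK| cos ∠K₁AB cos ∠KAB`, and likewise for `E`.
Hence `EF ⊥ AK` as soon as `∠K₁AB = ∠KAC` and `∠K₁AC = ∠KAB`; as `VU ⊥ AK` too, `VU ∥ EF`.

The definition of the isogonal conjugate only gives the first of these two equalities at each
vertex: an unoriented angle fixes the ray `AK₁` only up to reflection in `AB`. The second one holds
once `K₁` is known to lie inside the triangle, which follows from a cyclic argument. If `K₁` is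
strictly on the inner side of `AB`, the two oriented angles `∡(AB, AK₁)` and `∡(AK, AC)` have the
same sign, so they are equal, and then `K₁` is strictly inside the angle `A`, in particular
strictly on the inner side of `CA`. Going round the triangle, `K₁` is inside as soon as it is on
the inner side of one side line, and every point of the plane is.
-/

open InnerProductGeometry Module
open scoped RealInnerProductSpace EuclideanSpace

section Plane

variable {V : Type*} [NormedAddCommGroup V] [InnerProductSpace ℝ V] [Fact (finrank ℝ V = 2)]

theorem exists_eq_smul_of_inner_eq_zero {q x y : V} (hq : q ≠ 0) (hy : y ≠ 0)
    (hxq : ⟪x, q⟫ = 0) (hyq : ⟪y, q⟫ = 0) : ∃ c : ℝ, x = c • y := by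
  have : Fact (finrank ℝ V = 1 + 1) := ‹Fact (finrank ℝ V = 2)›
  have hx : x ∈ (ℝ ∙ q)ᗮ := Submodule.mem_orthogonal_singleton_iff_inner_left.2 hxq
  have hy' : y ∈ (ℝ ∙ q)ᗮ := Submodule.mem_orthogonal_singleton_iff_inner_left.2 hyq
  obtain ⟨c, hc⟩ := (finrank_eq_one_iff_of_nonzero' (⟨y, hy'⟩ : (ℝ ∙ q)ᗮ)
    (by simpa using hy)).1 (Submodule.finrank_orthogonal_span_singleton hq) ⟨x, hx⟩
  exact ⟨c, by simpa using congrArg Subtype.val hc.symm⟩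

theorem AffineIndependent.exists_eq_smul_add_smul_add_smul {A B C : V}
    (h : AffineIndependent ℝ ![A, B, C]) (P : V) :
    ∃ α β γ : ℝ, α + β + γ = 1 ∧ P = α • A + β • B + γ • C ∧
      (P ∈ interior (convexHull ℝ {A, B, C}) → 0 < α ∧ 0 < β ∧ 0 < γ) := by
  have := FiniteDimensional.of_fact_finrank_eq_two (K := ℝ) (V := V)
  let b : AffineBasis (Fin 3) ℝ V := ⟨![A, B, C], h, by
    rw [h.affineSpan_eq_top_iff_card_eq_finrank_add_one, Fintype.card_fin,
      (Fact.out : finrank ℝ V = 2)]⟩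
  have hsum := b.sum_coord_apply_eq_one P
  have hP := b.linear_combination_coord_eq_self P
  simp only [Fin.sum_univ_three] at hsum hP
  refine ⟨b.coord 0 P, b.coord 1 P, b.coord 2 P, hsum, hP.symm, fun hint => ?_⟩
  have hrange : Set.range b = {A, B, C} := by
    change Set.range ![A, B, C] = _
    rw [Matrix.range_cons, Matrix.range_cons_cons_empty, Set.singleton_union]
  rw [← hrange, b.interior_convexHull] at hint
  exact ⟨hint 0, hint 1, hint 2⟩

variable [Module.Oriented ℝ V (Fin 2)]

/-- `(∡ P X Y).sign = s` and `(∡ P Z X).sign = s` together say that `P` is strictly inside the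
angle `ZXY`, whose orientation is then `s`. For `K₁` only the first is assumed. -/
theorem angle_eq_and_oangle_sign_eq_of_angle_eq {X Y Z K K₁ : V} {s : SignType} (hs : s ≠ 0)
    (hKY : (∡ K X Y).sign = s) (hKZ : (∡ K Z X).sign = s) (hK₁Y : (∡ K₁ X Y).sign = s)
    (h : ∠ K₁ X Y = ∠ K X Z) : ∠ K₁ X Z = ∠ K X Y ∧ (∡ K₁ Z X).sign = s := by
  have hZXK : (∡ Z X K).sign = s := (oangle_rotate_sign K Z X).trans hKZ
  have hY : Y ≠ X := right_ne_of_oangle_sign_ne_zero (hKY ▸ hs)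
  have hZ : Z ≠ X := left_ne_of_oangle_sign_ne_zero (hZXK ▸ hs)
  have hK : K ≠ X := left_ne_of_oangle_sign_ne_zero (hKY ▸ hs)
  have hK₁ : K₁ ≠ X := left_ne_of_oangle_sign_ne_zero (hK₁Y ▸ hs)
  have hO : ∡ K₁ X Y = ∡ Z X K :=
    oangle_eq_of_angle_eq_of_sign_eq (by rw [h, EuclideanGeometry.angle_comm])
      (hK₁Y.trans hZXK.symm)
  have hO' : ∡ K X Y = ∡ Z X K₁ := by
    have h₁ := oangle_add hZ hK hY
    have h₂ := oangle_add_swap hZ hK₁ hY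
    rw [hO] at h₂
    exact add_left_cancel (h₁.trans h₂.symm)
  refine ⟨?_, ?_⟩
  · rw [EuclideanGeometry.angle_comm,
      (angle_eq_iff_oangle_eq_of_sign_eq hZ hK₁ hK hY (by rw [hO'])).2 hO'.symm]
  · rw [← oangle_rotate_sign, ← hO', hKY]

theorem oangle_sign_eq_sign_mul_of_sub_eq {A B C P : V} {β γ : ℝ}
    (hP : P - A = γ • (C - A) + β • (B - A)) :
    (∡ P A B).sign = SignType.sign γ * (∡ C A B).sign := by
  simp only [EuclideanGeometry.oangle, vsub_eq_sub, hP]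
  exact o.oangle_sign_smul_add_smul_left _ _ _ _

theorem oangle_sign_eq_sign_mul_of_eq_smul_add_smul_add_smul {A B C P : V} {α β γ : ℝ}
    (hsum : α + β + γ = 1) (hP : P = α • A + β • B + γ • C) :
    (∡ P A B).sign = SignType.sign γ * (∡ A B C).sign ∧
      (∡ P B C).sign = SignType.sign α * (∡ A B C).sign ∧
      (∡ P C A).sign = SignType.sign β * (∡ A B C).sign := by
  have hα : α = 1 - β - γ := by linarith
  have hA : P - A = γ • (C - A) + β • (B - A) := by rw [hP, hα]; module
  have hB : P - B = α • (A - B) + γ • (C - B) := by rw [hP, hα]; module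
  have hC : P - C = β • (B - C) + α • (A - C) := by rw [hP, hα]; module
  refine ⟨?_, ?_, ?_⟩
  · rw [oangle_sign_eq_sign_mul_of_sub_eq hA, oangle_rotate_sign, oangle_rotate_sign]
  · rw [oangle_sign_eq_sign_mul_of_sub_eq hB]
  · rw [oangle_sign_eq_sign_mul_of_sub_eq hC, oangle_rotate_sign]

theorem oangle_sign_ne_zero_of_affineIndependent {A B C : V}
    (h : AffineIndependent ℝ ![A, B, C]) : (∡ A B C).sign ≠ 0 :=
  Real.Angle.sign_ne_zero_iff.2 (oangle_ne_zero_and_ne_pi_iff_affineIndependent.2 h)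

theorem oangle_sign_eq_of_mem_interior_convexHull {A B C K : V}
    (h : AffineIndependent ℝ ![A, B, C]) (hK : K ∈ interior (convexHull ℝ {A, B, C})) :
    (∡ K A B).sign = (∡ A B C).sign ∧ (∡ K B C).sign = (∡ A B C).sign ∧
      (∡ K C A).sign = (∡ A B C).sign := by
  obtain ⟨α, β, γ, hsum, hK', hpos⟩ := h.exists_eq_smul_add_smul_add_smul K
  obtain ⟨hα, hβ, hγ⟩ := hpos hK
  simpa [sign_pos hα, sign_pos hβ, sign_pos hγ] using
    oangle_sign_eq_sign_mul_of_eq_smul_add_smul_add_smul hsum hK'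

theorem oangle_sign_eq_or_of_affineIndependent {A B C : V} (h : AffineIndependent ℝ ![A, B, C])
    (P : V) : (∡ P A B).sign = (∡ A B C).sign ∨ (∡ P B C).sign = (∡ A B C).sign ∨
      (∡ P C A).sign = (∡ A B C).sign := by
  obtain ⟨α, β, γ, hsum, hP, -⟩ := h.exists_eq_smul_add_smul_add_smul P
  obtain ⟨hA, hB, hC⟩ := oangle_sign_eq_sign_mul_of_eq_smul_add_smul_add_smul hsum hP
  rcases lt_or_ge 0 γ with hγ | hγ
  · exact .inl (by rw [hA, sign_pos hγ, one_mul])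
  rcases lt_or_ge 0 α with hα | hα
  · exact .inr (.inl (by rw [hB, sign_pos hα, one_mul]))
  exact .inr (.inr (by rw [hC, sign_pos (by linarith), one_mul]))

end Plane

local notation "ℝ²" => EuclideanSpace ℝ (Fin 2)

section

theorem IsFoot.symm {P F X Y : ℝ²} (h : IsFoot P F X Y) : IsFoot P F Y X :=
  ⟨Set.pair_comm X Y ▸ h.1, by rw [← neg_sub Y X, inner_neg_right, h.2, neg_zero]⟩

theorem IsFoot.inner_sub_eq {P F X Y : ℝ²} (h : IsFoot P F X Y) (hXY : X ≠ Y) (Q : ℝ²) :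
    ⟪F - X, Q - X⟫ = ‖P - X‖ * ‖Q - X‖ * (cos (∠ P X Y) * cos (∠ Q X Y)) := by
  obtain ⟨t, ht⟩ := mem_affineSpan_pair_iff_exists_lineMap_eq.1 h.1
  have hF : F - X = t • (Y - X) := by rw [← ht]; exact AffineMap.lineMap_vsub_left X Y t
  have hb : ‖Y - X‖ ≠ 0 := norm_ne_zero_iff.2 (sub_ne_zero.2 hXY.symm)
  have hP : ⟪P - X, Y - X⟫ = t * ‖Y - X‖ ^ 2 := by
    have h₂ := h.2
    rw [show P - F = (P - X) - t • (Y - X) by rw [← hF]; abel, inner_sub_left,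
      real_inner_smul_left, real_inner_self_eq_norm_sq] at h₂
    linarith
  have hcos (R : ℝ²) : cos (∠ R X Y) * (‖R - X‖ * ‖Y - X‖) = ⟪R - X, Y - X⟫ :=
    cos_angle_mul_norm_mul_norm _ _
  apply mul_right_cancel₀ (pow_ne_zero 2 hb)
  calc ⟪F - X, Q - X⟫ * ‖Y - X‖ ^ 2 = ⟪P - X, Y - X⟫ * ⟪Q - X, Y - X⟫ := by
        rw [hF, real_inner_smul_left, hP, real_inner_comm]; ring
    _ = _ := by rw [← hcos P, ← hcos Q]; ring

theorem inner_sub_eq_zero_of_isFoot {X Y Z K K₁ F E : ℝ²} (hF : IsFoot K₁ F X Y)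
    (hE : IsFoot K₁ E X Z) (hXY : X ≠ Y) (hXZ : X ≠ Z) (hY : ∠ K₁ X Y = ∠ K X Z)
    (hZ : ∠ K₁ X Z = ∠ K X Y) : ⟪F - E, K - X⟫ = 0 := by
  rw [← sub_sub_sub_cancel_right F E X, inner_sub_left, hF.inner_sub_eq hXY,
    hE.inner_sub_eq hXZ, hY, hZ]
  ring

variable [Module.Oriented ℝ ℝ² (Fin 2)]

theorem IsFoot.ne_of_oangle_sign_ne_zero {X Y Z K₁ F E : ℝ²} (hF : IsFoot K₁ F X Y)
    (hE : IsFoot K₁ E X Z) (hXYZ : (∡ Z X Y).sign ≠ 0) (hK₁ : (∡ K₁ X Y).sign ≠ 0) : F ≠ E := by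
  rintro rfl
  by_cases hK₁F : K₁ = F
  · subst hK₁F
    exact hK₁ (oangle_sign_eq_zero_iff_collinear.2 (collinear_insert_of_mem_affineSpan_pair hF.1))
  -- otherwise `XY` and `XZ` are both perpendicular to `K₁F`, hence parallel
  obtain ⟨t, ht⟩ := exists_eq_smul_of_inner_eq_zero (sub_ne_zero.2 hK₁F)
    (sub_ne_zero.2 (left_ne_of_oangle_sign_ne_zero hXYZ))
    (by rw [real_inner_comm]; exact hF.2) (by rw [real_inner_comm]; exact hE.2)
  apply hXYZ
  simp only [EuclideanGeometry.oangle, vsub_eq_sub, ht]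
  rw [o.oangle_sign_smul_right, o.oangle_self, Real.Angle.sign_zero, mul_zero]

theorem exists_eq_smul_sub_of_isFoot {X Y Z K K₁ F E U W : ℝ²} (hF : IsFoot K₁ F X Y)
    (hE : IsFoot K₁ E X Z) (hY : ∠ K₁ X Y = ∠ K X Z) (hZ : ∠ K₁ X Z = ∠ K X Y)
    (hXYZ : (∡ Z X Y).sign ≠ 0) (hK : K ≠ X) (hK₁ : (∡ K₁ X Y).sign ≠ 0)
    (hUW : ⟪X - K, U - W⟫ = 0) : ∃ c : ℝ, U - W = c • (F - E) := by
  have hFE := inner_sub_eq_zero_of_isFoot hF hE (right_ne_of_oangle_sign_ne_zero hXYZ).symm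
    (left_ne_of_oangle_sign_ne_zero hXYZ).symm hY hZ
  refine exists_eq_smul_of_inner_eq_zero (sub_ne_zero.2 hK.symm)
    (sub_ne_zero.2 (hF.ne_of_oangle_sign_ne_zero hE hXYZ hK₁)) (by rwa [real_inner_comm]) ?_
  rw [← neg_sub K X, inner_neg_right, hFE, neg_zero]

theorem IsIsogonalConj.oangle_sign_eq {A B C K K₁ : ℝ²} (hABC : AffineIndependent ℝ ![A, B, C])
    (hK : K ∈ interior (convexHull ℝ {A, B, C})) (h : IsIsogonalConj A B C K K₁) :
    (∡ K₁ A B).sign = (∡ A B C).sign ∧ (∡ K₁ B C).sign = (∡ A B C).sign ∧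
      (∡ K₁ C A).sign = (∡ A B C).sign := by
  have hs := oangle_sign_ne_zero_of_affineIndependent hABC
  obtain ⟨hKA, hKB, hKC⟩ := oangle_sign_eq_of_mem_interior_convexHull hABC hK
  have hA := fun hK₁A ↦ (angle_eq_and_oangle_sign_eq_of_angle_eq hs hKA hKC hK₁A h.1).2
  have hB := fun hK₁B ↦ (angle_eq_and_oangle_sign_eq_of_angle_eq hs hKB hKA hK₁B h.2.1).2
  have hC := fun hK₁C ↦ (angle_eq_and_oangle_sign_eq_of_angle_eq hs hKC hKB hK₁C h.2.2).2
  rcases oangle_sign_eq_or_of_affineIndependent hABC K₁ with h₁ | h₁ | h₁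
  · exact ⟨h₁, hC (hA h₁), hA h₁⟩
  · exact ⟨hB h₁, h₁, hA (hB h₁)⟩
  · exact ⟨hB (hC h₁), hC h₁, h₁⟩

theorem IsIsogonalConj.swap {A B C K K₁ : ℝ²} (hABC : AffineIndependent ℝ ![A, B, C])
    (hK : K ∈ interior (convexHull ℝ {A, B, C})) (h : IsIsogonalConj A B C K K₁) :
    IsIsogonalConj A C B K K₁ := by
  have hs := oangle_sign_ne_zero_of_affineIndependent hABC
  obtain ⟨hKA, hKB, hKC⟩ := oangle_sign_eq_of_mem_interior_convexHull hABC hK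
  obtain ⟨hK₁A, hK₁B, hK₁C⟩ := h.oangle_sign_eq hABC hK
  exact ⟨(angle_eq_and_oangle_sign_eq_of_angle_eq hs hKA hKC hK₁A h.1).1,
    (angle_eq_and_oangle_sign_eq_of_angle_eq hs hKC hKB hK₁C h.2.2).1,
    (angle_eq_and_oangle_sign_eq_of_angle_eq hs hKB hKA hK₁B h.2.1).1⟩

end

theorem antipedal_pedal_homothetic_general (A B C K K₁ D E F T U V : EuclideanSpace ℝ (Fin 2))
    (hABC : AffineIndependent ℝ ![A, B, C])
    (hK : K ∈ interior (convexHull ℝ ({A, B, C} : Set (EuclideanSpace ℝ (Fin 2)))))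
    (hK₁ : IsIsogonalConj A B C K K₁)
    (hD : IsFoot K₁ D B C) (hE : IsFoot K₁ E C A) (hF : IsFoot K₁ F A B)
    (hAperp : inner ℝ (A - K) (U - V) = (0 : ℝ))
    (hBperp : inner ℝ (B - K) (V - T) = (0 : ℝ))
    (hCperp : inner ℝ (C - K) (U - T) = (0 : ℝ)) :
    (∃ c : ℝ, U - V = c • (F - E)) ∧ (∃ c : ℝ, T - V = c • (F - D)) ∧
      (∃ c : ℝ, U - T = c • (E - D)) := by
  let _ : Module.Oriented ℝ ℝ² (Fin 2) :=
    ⟨(EuclideanSpace.basisFun (Fin 2) ℝ).toBasis.orientation⟩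
  have hs := oangle_sign_ne_zero_of_affineIndependent hABC
  have hCAB : (∡ C A B).sign ≠ 0 := by rwa [oangle_rotate_sign, oangle_rotate_sign]
  have hBCA : (∡ B C A).sign ≠ 0 := by rwa [oangle_rotate_sign]
  obtain ⟨hKA, hKB, hKC⟩ := oangle_sign_eq_of_mem_interior_convexHull hABC hK
  obtain ⟨hK₁A, hK₁B, hK₁C⟩ := hK₁.oangle_sign_eq hABC hK
  have hK₁' := hK₁.swap hABC hK
  refine ⟨?_, ?_, ?_⟩
  · exact exists_eq_smul_sub_of_isFoot hF hE.symm hK₁.1 hK₁'.1 hCAB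
      (left_ne_of_oangle_sign_ne_zero (hKA.trans_ne hs)) (hK₁A.trans_ne hs) hAperp
  · obtain ⟨c, hc⟩ := exists_eq_smul_sub_of_isFoot hD hF.symm hK₁.2.1 hK₁'.2.2 hs
      (left_ne_of_oangle_sign_ne_zero (hKB.trans_ne hs)) (hK₁B.trans_ne hs) hBperp
    exact ⟨c, by rw [← neg_sub, hc, ← smul_neg, neg_sub]⟩
  · exact exists_eq_smul_sub_of_isFoot hE hD.symm hK₁.2.2 hK₁'.2.1 hBCA
      (left_ne_of_oangle_sign_ne_zero (hKC.trans_ne hs)) (hK₁C.trans_ne hs) hCperp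

theorem antipedal_pedal_homothetic (A B C K K₁ D E F T U V : EuclideanSpace ℝ (Fin 2))
    (hABC : AffineIndependent ℝ ![A, B, C])
    (hK : K ∈ interior (convexHull ℝ ({A, B, C} : Set (EuclideanSpace ℝ (Fin 2)))))
    (hK₁ : IsIsogonalConj A B C K K₁)
    (hD : IsFoot K₁ D B C) (hE : IsFoot K₁ E C A) (hF : IsFoot K₁ F A B)
    (hA : A ∈ affineSpan ℝ ({V, U} : Set (EuclideanSpace ℝ (Fin 2))))
    (hAperp : inner ℝ (A - K) (U - V) = (0 : ℝ))
    (hB : B ∈ affineSpan ℝ ({T, V} : Set (EuclideanSpace ℝ (Fin 2))))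
    (hBperp : inner ℝ (B - K) (V - T) = (0 : ℝ))
    (hCmem : C ∈ affineSpan ℝ ({T, U} : Set (EuclideanSpace ℝ (Fin 2))))
    (hCperp : inner ℝ (C - K) (U - T) = (0 : ℝ)) :
    (∃ c : ℝ, U - V = c • (F - E)) ∧ (∃ c : ℝ, T - V = c • (F - D)) ∧
      (∃ c : ℝ, U - T = c • (E - D)) :=
  antipedal_pedal_homothetic_general A B C K K₁ D E F T U V hABC hK hK₁ hD hE hF hAperp hBperp
    hCperp
end

section
/- Let ABC be a nondegenerate triangle with circumcenter O and circumradius R, and let H be its orthocenter with orthic triangle A'B'C' (feet of the altitudes). Then area(A'B'C')/area(ABC) = |R² − OH²|/(4R²). -/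
open EuclideanGeometry Real

/-!
Euler's pedal triangle theorem, in signed form: if `D, E, F` are the feet of the perpendiculars
from a point `P` to the sides of `ABC`, then `4 R² [DEF] = (R² - OP²) [ABC]`.
With `A` at the origin this is a rational identity: the foot parameters are projection quotients
and the circumcenter is given by Cramer's rule, so clearing denominators reduces it to `ring`.
-/

local notation "ℝ²" => EuclideanSpace ℝ (Fin 2)

noncomputable def signedArea (X Y Z : ℝ²) : ℝ :=
  ((Y 0 - X 0) * (Z 1 - X 1) - (Y 1 - X 1) * (Z 0 - X 0)) / 2

theorem triArea_eq_abs_signedArea (X Y Z : ℝ²) : triArea X Y Z = |signedArea X Y Z| := by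
  rw [triArea, signedArea, abs_div, abs_two]

theorem inner_eq_fin_two (x y : ℝ²) : inner ℝ x y = x 0 * y 0 + x 1 * y 1 := by
  simp [PiLp.inner_apply, Fin.sum_univ_two, mul_comm]

theorem norm_sq_eq_fin_two (x : ℝ²) : ‖x‖ ^ 2 = x 0 ^ 2 + x 1 ^ 2 := by
  simp [EuclideanSpace.norm_sq_eq, Fin.sum_univ_two]

theorem dist_sq_eq_fin_two (x y : ℝ²) : dist x y ^ 2 = (x 0 - y 0) ^ 2 + (x 1 - y 1) ^ 2 := by
  rw [EuclideanSpace.dist_eq, Real.sq_sqrt (by positivity)]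
  simp [Fin.sum_univ_two, sq_abs, Real.dist_eq]

theorem collinear_of_signedArea_eq_zero {A B C : ℝ²} (h : signedArea A B C = 0) :
    Collinear ℝ {A, B, C} := by
  rcases eq_or_ne A B with rfl | hAB
  · simpa using collinear_pair ℝ A C
  have hAB' : (B 0 - A 0) ^ 2 + (B 1 - A 1) ^ 2 ≠ 0 := by
    rw [← dist_sq_eq_fin_two]
    exact pow_ne_zero 2 (dist_ne_zero.mpr hAB.symm)
  have hC : C ∈ line[ℝ, A, B] := by
    refine mem_affineSpan_pair_iff_exists_lineMap_eq.mpr ⟨((C 0 - A 0) * (B 0 - A 0) +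
      (C 1 - A 1) * (B 1 - A 1)) / ((B 0 - A 0) ^ 2 + (B 1 - A 1) ^ 2), ?_⟩
    simp only [signedArea] at h
    ext i
    fin_cases i <;> simp [AffineMap.lineMap_apply_module'] <;> field_simp
    · linear_combination 2 * (B 1 - A 1) * h
    · linear_combination -2 * (B 0 - A 0) * h
  have := collinear_insert_of_mem_affineSpan_pair hC
  rwa [Set.insert_comm C, Set.pair_comm C] at this

theorem AffineIndependent.signedArea_ne_zero {A B C : ℝ²}
    (h : AffineIndependent ℝ ![A, B, C]) : signedArea A B C ≠ 0 :=
  fun h0 => affineIndependent_iff_not_collinear_set.mp h (collinear_of_signedArea_eq_zero h0)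

theorem IsFoot.exists_eq_lineMap {P F X Y : ℝ²} (h : IsFoot P F X Y) :
    ∃ t : ℝ, F = AffineMap.lineMap X Y t ∧ t * ‖Y - X‖ ^ 2 = inner ℝ (P - X) (Y - X) := by
  obtain ⟨t, rfl⟩ := mem_affineSpan_pair_iff_exists_lineMap_eq.mp h.1
  refine ⟨t, rfl, ?_⟩
  have := h.2
  rw [AffineMap.lineMap_apply_module', sub_add_eq_sub_sub_swap, inner_sub_left,
    real_inner_smul_left, real_inner_self_eq_norm_sq] at this
  exact (sub_eq_zero.mp this).symm

set_option maxHeartbeats 1000000 in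
/-- The pedal identity with `A = 0`; `s`, `t`, `u` locate the feet on `BC`, `CA`, `AB`. -/
theorem pedal_cross_identity {b₀ b₁ c₀ c₁ o₀ o₁ p₀ p₁ s t u R : ℝ}
    (hABC : b₀ * c₁ - b₁ * c₀ ≠ 0)
    (hBC : (c₀ - b₀) ^ 2 + (c₁ - b₁) ^ 2 ≠ 0) (hCA : c₀ ^ 2 + c₁ ^ 2 ≠ 0)
    (hAB : b₀ ^ 2 + b₁ ^ 2 ≠ 0)
    (hOA : o₀ ^ 2 + o₁ ^ 2 = R ^ 2) (hOB : (o₀ - b₀) ^ 2 + (o₁ - b₁) ^ 2 = R ^ 2)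
    (hOC : (o₀ - c₀) ^ 2 + (o₁ - c₁) ^ 2 = R ^ 2)
    (hs : s * ((c₀ - b₀) ^ 2 + (c₁ - b₁) ^ 2) = (p₀ - b₀) * (c₀ - b₀) + (p₁ - b₁) * (c₁ - b₁))
    (ht : t * (c₀ ^ 2 + c₁ ^ 2) = (c₀ - p₀) * c₀ + (c₁ - p₁) * c₁)
    (hu : u * (b₀ ^ 2 + b₁ ^ 2) = p₀ * b₀ + p₁ * b₁) :
    4 * R ^ 2 * (((1 - t) * c₀ - (b₀ + s * (c₀ - b₀))) * (u * b₁ - (b₁ + s * (c₁ - b₁))) -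
        ((1 - t) * c₁ - (b₁ + s * (c₁ - b₁))) * (u * b₀ - (b₀ + s * (c₀ - b₀)))) =
      (R ^ 2 - ((o₀ - p₀) ^ 2 + (o₁ - p₁) ^ 2)) * (b₀ * c₁ - b₁ * c₀) := by
  rw [← eq_div_iff hBC] at hs
  rw [← eq_div_iff hCA] at ht
  rw [← eq_div_iff hAB] at hu
  have h2 : 2 * (b₀ * c₁ - b₁ * c₀) ≠ 0 := mul_ne_zero two_ne_zero hABC
  have ho₀ : o₀ = ((b₀ ^ 2 + b₁ ^ 2) * c₁ - (c₀ ^ 2 + c₁ ^ 2) * b₁) /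
      (2 * (b₀ * c₁ - b₁ * c₀)) := by
    rw [eq_div_iff h2]
    linear_combination c₁ * (hOA - hOB) - b₁ * (hOA - hOC)
  have ho₁ : o₁ = ((c₀ ^ 2 + c₁ ^ 2) * b₀ - (b₀ ^ 2 + b₁ ^ 2) * c₀) /
      (2 * (b₀ * c₁ - b₁ * c₀)) := by
    rw [eq_div_iff h2]
    linear_combination b₀ * (hOA - hOC) - c₀ * (hOA - hOB)
  subst hs ht hu ho₀ ho₁
  rw [← hOA]
  field_simp
  ring

theorem four_mul_sq_mul_signedArea_pedal {A B C O P D E F : ℝ²} {R : ℝ}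
    (hABC : signedArea A B C ≠ 0) (hOA : dist O A = R) (hOB : dist O B = R)
    (hOC : dist O C = R) (hD : IsFoot P D B C) (hE : IsFoot P E C A) (hF : IsFoot P F A B) :
    4 * R ^ 2 * signedArea D E F = (R ^ 2 - dist O P ^ 2) * signedArea A B C := by
  obtain ⟨s, rfl, hs⟩ := hD.exists_eq_lineMap
  obtain ⟨t, rfl, ht⟩ := hE.exists_eq_lineMap
  obtain ⟨u, rfl, hu⟩ := hF.exists_eq_lineMap
  have hne : ∀ {X Y : ℝ²}, X ≠ Y → (Y 0 - X 0) ^ 2 + (Y 1 - X 1) ^ 2 ≠ 0 := fun h => by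
    rw [← dist_sq_eq_fin_two]; exact pow_ne_zero 2 (dist_ne_zero.mpr h.symm)
  have hAB : A ≠ B := by rintro rfl; exact hABC (by simp only [signedArea]; ring)
  have hBC : B ≠ C := by rintro rfl; exact hABC (by simp only [signedArea]; ring)
  have hCA : C ≠ A := by rintro rfl; exact hABC (by simp only [signedArea]; ring)
  have hO : ∀ {X}, dist O X = R → (O 0 - X 0) ^ 2 + (O 1 - X 1) ^ 2 = R ^ 2 := fun h => by
    rw [← dist_sq_eq_fin_two, h]
  rw [dist_sq_eq_fin_two]
  rw [norm_sq_eq_fin_two, inner_eq_fin_two] at hs ht hu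
  simp only [signedArea, AffineMap.lineMap_apply_module', PiLp.add_apply, PiLp.smul_apply,
    PiLp.sub_apply, smul_eq_mul] at hs ht hu hABC ⊢
  linear_combination (1 / 2 : ℝ) * pedal_cross_identity (R := R) (s := s) (t := t) (u := u)
    (b₀ := B 0 - A 0) (b₁ := B 1 - A 1) (c₀ := C 0 - A 0) (c₁ := C 1 - A 1)
    (o₀ := O 0 - A 0) (o₁ := O 1 - A 1) (p₀ := P 0 - A 0) (p₁ := P 1 - A 1)
    (fun h => hABC (by linear_combination h / 2)) (fun h => hne hBC (by linear_combination h))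
    (fun h => hne hCA (by linear_combination h)) (fun h => hne hAB (by linear_combination h))
    (by linear_combination hO hOA) (by linear_combination hO hOB) (by linear_combination hO hOC)
    (by linear_combination hs) (by linear_combination ht) (by linear_combination hu)

theorem orthic_triangle_area_general (A B C O H A' B' C' : EuclideanSpace ℝ (Fin 2)) (R : ℝ)
    (hABC : AffineIndependent ℝ ![A, B, C])
    (hOA : dist O A = R) (hOB : dist O B = R) (hOC : dist O C = R)
    (hA' : IsFoot H A' B C) (hB' : IsFoot H B' C A) (hC' : IsFoot H C' A B) :
    triArea A' B' C' / triArea A B C = |R ^ 2 - (dist O H) ^ 2| / (4 * R ^ 2) := by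
  have hS := hABC.signedArea_ne_zero
  have hR : 0 < 4 * R ^ 2 := by
    refine mul_pos four_pos (pow_pos (lt_of_le_of_ne (hOA ▸ dist_nonneg) ?_) 2)
    rintro rfl
    obtain rfl := dist_eq_zero.mp hOA
    obtain rfl := dist_eq_zero.mp hOB
    exact hS (by simp only [signedArea]; ring)
  have key := four_mul_sq_mul_signedArea_pedal hS hOA hOB hOC hA' hB' hC'
  rw [triArea_eq_abs_signedArea, triArea_eq_abs_signedArea,
    div_eq_div_iff (abs_ne_zero.mpr hS) hR.ne']
  calc |signedArea A' B' C'| * (4 * R ^ 2) = |4 * R ^ 2 * signedArea A' B' C'| := by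
        rw [abs_mul, abs_of_pos hR, mul_comm]
    _ = |R ^ 2 - dist O H ^ 2| * |signedArea A B C| := by rw [key, abs_mul]

theorem orthic_triangle_area (A B C O H A' B' C' : EuclideanSpace ℝ (Fin 2)) (R : ℝ)
    (hABC : AffineIndependent ℝ ![A, B, C])
    (hOA : dist O A = R) (hOB : dist O B = R) (hOC : dist O C = R)
    (hH₁ : inner ℝ (H - A) (C - B) = (0 : ℝ))
    (hH₂ : inner ℝ (H - B) (C - A) = (0 : ℝ))
    (hH₃ : inner ℝ (H - C) (B - A) = (0 : ℝ))
    (hA' : IsFoot H A' B C) (hB' : IsFoot H B' C A) (hC' : IsFoot H C' A B) :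
    triArea A' B' C' / triArea A B C = |R ^ 2 - (dist O H) ^ 2| / (4 * R ^ 2) :=
  orthic_triangle_area_general A B C O H A' B' C' R hABC hOA hOB hOC hA' hB' hC'
end
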